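/- Let n ≥ 1 and N ≥ 0 be integers. Then every trigonometric polynomial W of degree at most N satisfies ∫₀¹ |W(x) − 𝓑_{n+1}(x)| dx ≥ |E_{n+1}(θ_n)|/(2N+2)^{n+1}. -/

import Mathlib

open MeasureTheory

/-- The `m`-th Bernoulli polynomial evaluated at a real number `x`,
with the generating function `t e^{xt}/(e^t - 1) = ∑ B_m(x) t^m / m!`. -/
noncomputable def bernoulliPoly (m : ℕ) (x : ℝ) : ℝ :=
  Polynomial.aeval x (Polynomial.bernoulli m)

/-- The `m`-th Bernoulli periodic function `𝓑_m(x) = B_m(x - ⌊x⌋)`. -/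
noncomputable def bernoulliPer (m : ℕ) (x : ℝ) : ℝ :=
  bernoulliPoly m (x - ⌊x⌋)

/-- `f : ℝ → ℂ` is a trigonometric polynomial of degree at most `N`:
`f x = ∑_{k=-N}^{N} c_k e^{2πikx}`. -/
def IsTrigPoly (N : ℕ) (f : ℝ → ℂ) : Prop :=
  ∃ c : ℤ → ℂ, ∀ x : ℝ,
    f x = ∑ k ∈ Finset.Icc (-(N : ℤ)) (N : ℤ),
      c k * Complex.exp (2 * (Real.pi : ℂ) * Complex.I * (k : ℂ) * (x : ℂ))

/-- The `m`-th Euler polynomial, via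
`E_m(x) = (2^{m+1}/(m+1)) (B_{m+1}((x+1)/2) - B_{m+1}(x/2))`. -/
noncomputable def eulerPoly (m : ℕ) (x : ℝ) : ℝ :=
  (2 ^ (m + 1) / ((m : ℝ) + 1)) *
    (bernoulliPoly (m + 1) ((x + 1) / 2) - bernoulliPoly (m + 1) (x / 2))

/-- `θ_n = 0` if `n` is even, `1/2` if `n` is odd. -/
noncomputable def theta (n : ℕ) : ℝ := if Even n then 0 else 1 / 2

/-!
Put `M = N + 1`, `θ = θ_n` and let `s x = (-1)^⌊2Mx - θ⌋`. Since `s (x + 1/(2M)) = -s x` while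
`e^{2πik/(2M)} ≠ -1` for `|k| < M`, the wave `s` is orthogonal to every trigonometric polynomial of
degree `N`. Integrating `𝓑_{n+1}` against `s` over the `2M` intervals where `s` is constant and
telescoping leaves an alternating sum of values of `B_{n+2}` at the points `(θ + j)/(2M)`, which
Raabe's multiplication theorem turns into `∫₀¹ s 𝓑_{n+1} = E_{n+1}(θ) / (2M)^{n+1}`. As `|s| = 1`,
`|∫₀¹ s (W - 𝓑_{n+1})| ≤ ∫₀¹ |W - 𝓑_{n+1}|`.
-/

open Function Set

lemma bernoulliPoly_eq_bernoulliFun : bernoulliPoly = bernoulliFun := by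
  funext k x
  simp [bernoulliPoly, bernoulliFun, Polynomial.eval_map_algebraMap]

lemma bernoulliPer_eq_comp_fract (k : ℕ) : bernoulliPer k = bernoulliFun k ∘ Int.fract := by
  funext x
  rw [bernoulliPer, bernoulliPoly_eq_bernoulliFun]
  rfl

lemma bernoulliPer_periodic (k : ℕ) : Periodic (bernoulliPer k) 1 := by
  simp [Periodic, bernoulliPer_eq_comp_fract]

lemma bernoulliPer_eq_of_mem_Ico (k : ℕ) {x : ℝ} (hx : x ∈ Ico 0 1) :
    bernoulliPer k x = bernoulliFun k x := by
  rw [bernoulliPer_eq_comp_fract, comp_apply, Int.fract_eq_self.mpr hx]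

lemma continuous_bernoulliPer {k : ℕ} (hk : k ≠ 1) : Continuous (bernoulliPer k) := by
  rw [bernoulliPer_eq_comp_fract]
  exact (continuous_bernoulliFun k).continuousOn.comp_fract''
    (bernoulliFun_endpoints_eq_of_ne_one hk).symm

lemma measurable_bernoulliPer (k : ℕ) : Measurable (bernoulliPer k) := by
  rw [bernoulliPer_eq_comp_fract]
  exact (continuous_bernoulliFun k).measurable.comp measurable_fract

lemma intervalIntegrable_bernoulliPer (k : ℕ) (a b : ℝ) :
    IntervalIntegrable (bernoulliPer k) volume a b := by
  obtain ⟨C, hC⟩ := (isCompact_Icc (a := (0 : ℝ)) (b := 1)).exists_bound_of_continuousOn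
    (continuous_bernoulliFun k).continuousOn
  have hbound : ∀ x, ‖bernoulliPer k x‖ ≤ C := fun x => by
    simpa [bernoulliPer_eq_comp_fract] using hC _ ⟨Int.fract_nonneg x, (Int.fract_lt_one x).le⟩
  rw [intervalIntegrable_iff]
  exact Measure.integrableOn_of_bounded measure_Ioc_lt_top.ne
    (measurable_bernoulliPer k).aestronglyMeasurable (ae_of_all _ hbound)

-- Only one-sided: at the integers `bernoulliPer (k + 1)` jumps for `k = 0` and has a corner
-- for `k = 1`.
lemma hasDerivWithinAt_Ioi_bernoulliPer (k : ℕ) (x : ℝ) :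
    HasDerivWithinAt (fun y => bernoulliPer (k + 1) y / (k + 1)) (bernoulliPer k x) (Ioi x) x := by
  have hpoly : HasDerivAt (fun y => bernoulliFun (k + 1) (y - ⌊x⌋) / (k + 1))
      (bernoulliPer k x) x := by
    simpa [bernoulliPer, bernoulliPoly_eq_bernoulliFun] using
      (antideriv_bernoulliFun k (x - ⌊x⌋)).comp_sub_const x (⌊x⌋ : ℝ)
  refine hpoly.hasDerivWithinAt.congr_of_eventuallyEq ?_ ?_
  · filter_upwards [Ioo_mem_nhdsGT (Int.lt_floor_add_one x)] with y hy
    rw [bernoulliPer, bernoulliPoly_eq_bernoulliFun,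
      Int.floor_eq_iff.mpr ⟨(Int.floor_le x).trans hy.1.le, hy.2⟩]
  · simp [bernoulliPer, bernoulliPoly_eq_bernoulliFun]

lemma intervalIntegral_bernoulliPer {k : ℕ} (hk : k ≠ 0) (a b : ℝ) :
    ∫ x in a..b, bernoulliPer k x =
      (bernoulliPer (k + 1) b - bernoulliPer (k + 1) a) / (k + 1) := by
  rw [intervalIntegral.integral_eq_sub_of_hasDeriv_right
    ((continuous_bernoulliPer (by omega)).div_const _).continuousOn
    (fun x _ => hasDerivWithinAt_Ioi_bernoulliPer k x) (intervalIntegrable_bernoulliPer k a b)]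
  ring

noncomputable def squareWave (M : ℕ) (θ x : ℝ) : ℝ := (-1) ^ ⌊2 * M * x - θ⌋

section squareWave

variable (M : ℕ) (θ : ℝ)

lemma abs_squareWave (x : ℝ) : |squareWave M θ x| = 1 := by
  simp [squareWave, abs_zpow]

lemma measurable_squareWave : Measurable (squareWave M θ) :=
  (Measurable.of_discrete (f := fun z : ℤ => (-1 : ℝ) ^ z)).comp
    (Int.measurable_floor.comp (by fun_prop))

lemma squareWave_periodic : Periodic (squareWave M θ) 1 := by
  intro x
  have harg : 2 * M * (x + 1) - θ = 2 * M * x - θ + ((2 * M : ℤ) : ℝ) := by push_cast; ring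
  rw [squareWave, harg, Int.floor_add_intCast, zpow_add₀ (by norm_num), zpow_mul]
  simp [squareWave]

lemma IntervalIntegrable.squareWave_mul {𝕜 : Type*} [RCLike 𝕜] {f : ℝ → 𝕜} {a b : ℝ}
    (hf : IntervalIntegrable f volume a b) :
    IntervalIntegrable (fun x => (squareWave M θ x : 𝕜) * f x) volume a b := by
  refine ⟨hf.1.bdd_mul (c := 1) ?_ (ae_of_all _ fun x => ?_),
    hf.2.bdd_mul (c := 1) ?_ (ae_of_all _ fun x => ?_)⟩
  all_goals first
    | exact (RCLike.measurable_ofReal.comp (measurable_squareWave M θ)).aestronglyMeasurable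
    | simp [abs_squareWave]

end squareWave

lemma squareWave_antiperiodic {M : ℕ} (hM : M ≠ 0) (θ : ℝ) :
    Antiperiodic (squareWave M θ) (1 / (2 * M)) := by
  intro x
  have harg : 2 * M * (x + 1 / (2 * M)) - θ = 2 * M * x - θ + ((1 : ℤ) : ℝ) := by
    field_simp; push_cast; ring
  rw [squareWave, harg, Int.floor_add_intCast, zpow_add_one₀ (by norm_num)]
  simp [squareWave]

lemma squareWave_eq_neg_one_pow {M : ℕ} (hM : M ≠ 0) (θ : ℝ) (j : ℕ) {x : ℝ}
    (hx : x ∈ Ico ((θ + j) / (2 * M)) ((θ + j + 1) / (2 * M))) :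
    squareWave M θ x = (-1) ^ j := by
  have h2M : (0 : ℝ) < 2 * M := by positivity
  rw [mem_Ico, div_le_iff₀ h2M, lt_div_iff₀ h2M] at hx
  have hfloor : ⌊2 * M * x - θ⌋ = j := by
    rw [Int.floor_eq_iff]; push_cast; constructor <;> linarith [hx.1, hx.2]
  rw [squareWave, hfloor, zpow_natCast]

lemma Function.Periodic.intervalIntegral_eq_zero_of_add_eq_mul {𝕜 : Type*} [RCLike 𝕜]
    {f : ℝ → 𝕜} {T c : ℝ} {μ : 𝕜} (hf : Periodic f T) (hμ : μ ≠ 1)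
    (hc : ∀ x, f (x + c) = μ * f x) :
    ∫ x in (0 : ℝ)..T, f x = 0 := by
  have hshift : ∫ x in (0 : ℝ)..T, f x = μ * ∫ x in (0 : ℝ)..T, f x := by
    calc ∫ x in (0 : ℝ)..T, f x = ∫ x in c..c + T, f x := by
          simpa using hf.intervalIntegral_add_eq 0 c
      _ = ∫ x in (0 : ℝ)..T, f (x + c) := by
          rw [intervalIntegral.integral_comp_add_right, zero_add, add_comm]
      _ = μ * ∫ x in (0 : ℝ)..T, f x := by
          simp only [hc, intervalIntegral.integral_const_mul]
  have : (1 - μ) * ∫ x in (0 : ℝ)..T, f x = 0 := by linear_combination hshift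
  exact (mul_eq_zero.mp this).resolve_left (sub_ne_zero.mpr hμ.symm)

lemma Complex.exp_pi_mul_I_mul_div_ne_neg_one {k : ℤ} {M : ℕ} (hk : |k| < M) :
    Complex.exp (Real.pi * Complex.I * k / M) ≠ -1 := by
  intro h
  have hM : (M : ℂ) ≠ 0 := by
    have : (0 : ℤ) < M := (abs_nonneg k).trans_lt hk
    exact_mod_cast this.ne'
  obtain ⟨t, ht⟩ := Complex.exp_eq_one_iff.mp
    (show Complex.exp (Real.pi * Complex.I * k / M + Real.pi * Complex.I) = 1 by
      rw [Complex.exp_add, h, Complex.exp_pi_mul_I]; norm_num)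
  have hkt : k + M = 2 * t * M := by
    field_simp at ht
    exact_mod_cast (by linear_combination ht : (k : ℂ) + M = 2 * t * M)
  rw [abs_lt] at hk
  have h1 : 0 < t := by nlinarith
  have h2 : t < 1 := by nlinarith
  omega

lemma IsTrigPoly.continuous {N : ℕ} {W : ℝ → ℂ} (hW : IsTrigPoly N W) : Continuous W := by
  obtain ⟨c, hc⟩ := hW
  rw [funext hc]
  fun_prop

lemma intervalIntegral_squareWave_mul_exp_eq_zero {M : ℕ} (θ : ℝ) {k : ℤ} (hk : |k| < M) :
    ∫ x in (0 : ℝ)..1, (squareWave M θ x : ℂ) *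
      Complex.exp (2 * Real.pi * Complex.I * k * x) = 0 := by
  have hM : M ≠ 0 := by rintro rfl; exact (abs_nonneg k).not_gt (by simpa using hk)
  refine Periodic.intervalIntegral_eq_zero_of_add_eq_mul (c := 1 / (2 * M))
    (μ := -Complex.exp (Real.pi * Complex.I * k / M)) ?_ ?_ fun x => ?_
  · intro x
    simp only [squareWave_periodic M θ x]
    rw [show (2 * Real.pi * Complex.I * k * ((x + 1 : ℝ) : ℂ)) =
      2 * Real.pi * Complex.I * k * x + k * (2 * Real.pi * Complex.I) by push_cast; ring,
      Complex.exp_add, Complex.exp_int_mul_two_pi_mul_I, mul_one]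
  · intro h
    exact Complex.exp_pi_mul_I_mul_div_ne_neg_one hk (neg_eq_iff_eq_neg.mp h)
  · rw [squareWave_antiperiodic hM θ x]
    rw [show (2 * Real.pi * Complex.I * k * ((x + 1 / (2 * M) : ℝ) : ℂ)) =
      2 * Real.pi * Complex.I * k * x + Real.pi * Complex.I * k / M by push_cast; field_simp,
      Complex.exp_add]
    push_cast
    ring

lemma intervalIntegral_squareWave_mul_eq_zero_of_isTrigPoly {M N : ℕ} (θ : ℝ) (hNM : N < M)
    {W : ℝ → ℂ} (hW : IsTrigPoly N W) :
    ∫ x in (0 : ℝ)..1, (squareWave M θ x : ℂ) * W x = 0 := by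
  obtain ⟨c, hc⟩ := hW
  simp_rw [hc, Finset.mul_sum, mul_left_comm _ (c _)]
  rw [intervalIntegral.integral_finsetSum]
  · refine Finset.sum_eq_zero fun k hk => ?_
    rw [Finset.mem_Icc] at hk
    rw [intervalIntegral.integral_const_mul,
      intervalIntegral_squareWave_mul_exp_eq_zero θ (abs_lt.mpr ⟨by omega, by omega⟩), mul_zero]
  · intro k _
    exact (IntervalIntegrable.squareWave_mul M θ
      ((by fun_prop : Continuous fun x : ℝ => Complex.exp (2 * Real.pi * Complex.I * k * x))
        |>.intervalIntegrable 0 1)).const_mul _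

open Finset in
lemma sum_range_neg_one_pow_mul_sub {R : Type*} [CommRing R] (g : ℕ → R) (L : ℕ) :
    ∑ j ∈ range L, (-1) ^ j * (g (j + 1) - g j) =
      g 0 - (-1) ^ L * g L - 2 * ∑ j ∈ range L, (-1) ^ j * g j := by
  induction L with
  | zero => simp
  | succ L ih => rw [sum_range_succ, sum_range_succ, ih, pow_succ]; ring

open Finset in
lemma sum_range_two_mul_neg_one_pow_mul {R : Type*} [CommRing R] (h : ℕ → R) (m : ℕ) :
    ∑ j ∈ range (2 * m), (-1) ^ j * h j = ∑ i ∈ range m, (h (2 * i) - h (2 * i + 1)) := by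
  induction m with
  | zero => simp
  | succ m ih =>
    rw [mul_add_one, sum_range_succ, sum_range_succ, ih, sum_range_succ, pow_succ, pow_mul]
    ring

lemma sum_range_neg_one_pow_mul_bernoulliFun {M : ℕ} (hM : M ≠ 0) (m : ℕ) (x : ℝ) :
    ∑ j ∈ Finset.range (2 * M), (-1) ^ j * bernoulliFun (m + 1) (x + j / (2 * M)) =
      -((m + 1) / 2) * eulerPoly m (2 * M * x) / (2 * M) ^ m := by
  have hraabe (y : ℝ) := bernoulliFun_mul (m + 1) hM y
  rw [sum_range_two_mul_neg_one_pow_mul, Finset.sum_sub_distrib]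
  have heven : ∑ i ∈ Finset.range M, bernoulliFun (m + 1) (x + ↑(2 * i) / (2 * M)) =
      ∑ i ∈ Finset.range M, bernoulliFun (m + 1) (x + i / M) := by
    refine Finset.sum_congr rfl fun i _ => ?_
    congr 2; push_cast; field_simp
  have hodd : ∑ i ∈ Finset.range M, bernoulliFun (m + 1) (x + ↑(2 * i + 1) / (2 * M)) =
      ∑ i ∈ Finset.range M, bernoulliFun (m + 1) (x + 1 / (2 * M) + i / M) := by
    refine Finset.sum_congr rfl fun i _ => ?_
    congr 1; push_cast; field_simp; ring
  have harg : (2 * M * x + 1) / 2 = M * (x + 1 / (2 * M)) := by field_simp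
  rw [heven, hodd, eulerPoly, bernoulliPoly_eq_bernoulliFun, harg,
    show 2 * M * x / 2 = M * x by ring, hraabe, hraabe]
  field_simp
  ring

lemma intervalIntegral_squareWave_mul_eq_neg_one_pow_mul {M : ℕ} (hM : M ≠ 0) (θ : ℝ) (j : ℕ)
    (f : ℝ → ℝ) :
    ∫ x in (θ + j) / (2 * M)..(θ + j + 1) / (2 * M), squareWave M θ x * f x =
      (-1) ^ j * ∫ x in (θ + j) / (2 * M)..(θ + j + 1) / (2 * M), f x := by
  have hle : (θ + j) / (2 * M) ≤ (θ + j + 1) / (2 * M) :=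
    div_le_div_of_nonneg_right (by linarith) (by positivity)
  rw [intervalIntegral.integral_of_le hle, intervalIntegral.integral_of_le hle,
    integral_Ioc_eq_integral_Ioo, integral_Ioc_eq_integral_Ioo, ← integral_const_mul]
  refine setIntegral_congr_fun measurableSet_Ioo fun x hx => ?_
  rw [squareWave_eq_neg_one_pow hM θ j (Ioo_subset_Ico_self hx)]

lemma intervalIntegral_squareWave_mul_bernoulliPer_eq_sum (n : ℕ) {M : ℕ} (hM : M ≠ 0) (θ : ℝ) :
    ∫ x in (0 : ℝ)..1, squareWave M θ x * bernoulliPer (n + 1) x =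
      -(2 / (n + 2)) * ∑ j ∈ Finset.range (2 * M),
        (-1) ^ j * bernoulliPer (n + 2) ((θ + j) / (2 * M)) := by
  set x : ℕ → ℝ := fun j => (θ + j) / (2 * M) with hx
  set g : ℕ → ℝ := fun j => bernoulliPer (n + 2) (x j)
  have hx_succ (j : ℕ) : x (j + 1) = (θ + j + 1) / (2 * M) := by simp [hx, add_assoc]
  have hx_last : x (2 * M) = x 0 + 1 := by simp only [hx]; push_cast; field_simp; ring
  have hg_last : g (2 * M) = g 0 := by
    simp only [g, hx_last, bernoulliPer_periodic (n + 2) (x 0)]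
  have hint (a b : ℝ) : IntervalIntegrable (fun x => squareWave M θ x * bernoulliPer (n + 1) x)
      volume a b :=
    IntervalIntegrable.squareWave_mul M θ (intervalIntegrable_bernoulliPer (n + 1) a b)
  calc ∫ y in (0 : ℝ)..1, squareWave M θ y * bernoulliPer (n + 1) y
      = ∫ y in x 0..x 0 + 1, squareWave M θ y * bernoulliPer (n + 1) y := by
        simpa using ((squareWave_periodic M θ).mul (bernoulliPer_periodic (n + 1))
          |>.intervalIntegral_add_eq 0 (x 0))
    _ = ∑ j ∈ Finset.range (2 * M),
          ∫ y in x j..x (j + 1), squareWave M θ y * bernoulliPer (n + 1) y := by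
        rw [← hx_last, intervalIntegral.sum_integral_adjacent_intervals fun j _ => hint _ _]
    _ = ∑ j ∈ Finset.range (2 * M), (-1) ^ j * ((g (j + 1) - g j) / (n + 2)) := by
        refine Finset.sum_congr rfl fun j _ => ?_
        rw [hx_succ, intervalIntegral_squareWave_mul_eq_neg_one_pow_mul hM θ j,
          intervalIntegral_bernoulliPer n.add_one_ne_zero]
        simp only [g, hx, add_assoc]
        push_cast
        ring
    _ = -(2 / (n + 2)) * ∑ j ∈ Finset.range (2 * M), (-1) ^ j * g j := by
        simp_rw [mul_div, ← Finset.sum_div, sum_range_neg_one_pow_mul_sub, hg_last, pow_mul]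
        ring

lemma intervalIntegral_squareWave_mul_bernoulliPer (n : ℕ) {M : ℕ} (hM : M ≠ 0) {θ : ℝ}
    (hθ : θ ∈ Ico 0 1) :
    ∫ x in (0 : ℝ)..1, squareWave M θ x * bernoulliPer (n + 1) x =
      eulerPoly (n + 1) θ / (2 * M) ^ (n + 1) := by
  have h2M : (0 : ℝ) < 2 * M := by positivity
  have hfun : ∀ j ∈ Finset.range (2 * M), (-1) ^ j * bernoulliPer (n + 2) ((θ + j) / (2 * M)) =
      (-1) ^ j * bernoulliFun (n + 2) (θ / (2 * M) + j / (2 * M)) := by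
    intro j hj
    have hj : (j : ℝ) + 1 ≤ 2 * M := by exact_mod_cast Finset.mem_range.mp hj
    rw [bernoulliPer_eq_of_mem_Ico, add_div]
    rw [mem_Ico, div_lt_one h2M]
    exact ⟨div_nonneg (by linarith [hθ.1, j.cast_nonneg (α := ℝ)]) h2M.le, by linarith [hθ.2]⟩
  rw [intervalIntegral_squareWave_mul_bernoulliPer_eq_sum n hM, Finset.sum_congr rfl hfun,
    sum_range_neg_one_pow_mul_bernoulliFun hM, mul_div_cancel₀ _ h2M.ne']
  push_cast
  field_simp
  ring

lemma theta_mem_Ico (n : ℕ) : theta n ∈ Ico 0 1 := by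
  unfold theta; split_ifs <;> norm_num

theorem L1_lower_bound_general (n N : ℕ)
    (W : ℝ → ℂ) (hW : IsTrigPoly N W) :
    (∫ x in (0 : ℝ)..1, ‖W x - (bernoulliPer (n + 1) x : ℂ)‖) ≥
      |eulerPoly (n + 1) (theta n)| / (2 * (N : ℝ) + 2) ^ (n + 1) := by
  set s : ℝ → ℂ := fun x => (squareWave (N + 1) (theta n) x : ℂ)
  have hbern : ∫ x in (0 : ℝ)..1, s x * (bernoulliPer (n + 1) x : ℂ) =
      ((eulerPoly (n + 1) (theta n) / (2 * N + 2) ^ (n + 1) : ℝ) : ℂ) := by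
    simp_rw [s, ← Complex.ofReal_mul, intervalIntegral.integral_ofReal,
      intervalIntegral_squareWave_mul_bernoulliPer n N.succ_ne_zero (theta_mem_Ico n)]
    push_cast
    ring
  have hsplit : ∫ x in (0 : ℝ)..1, s x * (W x - bernoulliPer (n + 1) x) =
      -((eulerPoly (n + 1) (theta n) / (2 * N + 2) ^ (n + 1) : ℝ) : ℂ) := by
    have hB := intervalIntegrable_bernoulliPer (n + 1) 0 1
    have hint_W : IntervalIntegrable (fun x => s x * W x) volume 0 1 :=
      (hW.continuous.intervalIntegrable 0 1).squareWave_mul _ _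
    have hint_bern : IntervalIntegrable (fun x => s x * (bernoulliPer (n + 1) x : ℂ)) volume 0 1 :=
      IntervalIntegrable.squareWave_mul _ _ ⟨hB.1.ofReal, hB.2.ofReal⟩
    simp_rw [mul_sub]
    rw [intervalIntegral.integral_sub hint_W hint_bern, hbern,
      intervalIntegral_squareWave_mul_eq_zero_of_isTrigPoly _ N.lt_succ_self hW, zero_sub]
  calc |eulerPoly (n + 1) (theta n)| / (2 * (N : ℝ) + 2) ^ (n + 1)
      = ‖∫ x in (0 : ℝ)..1, s x * (W x - bernoulliPer (n + 1) x)‖ := by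
        rw [hsplit, norm_neg, Complex.norm_real, Real.norm_eq_abs, abs_div,
          abs_of_pos (by positivity : (0 : ℝ) < (2 * N + 2) ^ (n + 1))]
    _ ≤ ∫ x in (0 : ℝ)..1, ‖s x * (W x - bernoulliPer (n + 1) x)‖ :=
        intervalIntegral.norm_integral_le_integral_norm zero_le_one
    _ = ∫ x in (0 : ℝ)..1, ‖W x - bernoulliPer (n + 1) x‖ := by
        simp [s, abs_squareWave]

theorem L1_lower_bound (n N : ℕ) (hn : 1 ≤ n)
    (W : ℝ → ℂ) (hW : IsTrigPoly N W) :
    (∫ x in (0 : ℝ)..1, ‖W x - (bernoulliPer (n + 1) x : ℂ)‖) ≥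
      |eulerPoly (n + 1) (theta n)| / (2 * (N : ℝ) + 2) ^ (n + 1) :=
  L1_lower_bound_general n N W hW
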